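/- Let g ≥ 1, let A₁, B₁, …, A_g, B_g ∈ O(3,1) be Lorentz matrices, and let u₁, w₁, …, u_g, w_g ∈ ℝ⁴ be arbitrary vectors. Define c₀ = I and c_j = c_{j−1}·(A_j B_j A_j⁻¹ B_j⁻¹) for 1 ≤ j ≤ g. Suppose v ∈ ℝ⁴ satisfies A_i v = v and B_i v = v for all i, and ⟨v, v⟩ ≠ 0, where ⟨·,·⟩ is the Minkowski inner product. If an integer e satisfies e·v = Σ_{i=1}^{g} [ c_{i−1}(I − A_i B_i A_i⁻¹) u_i + c_{i−1} A_i (I − B_i A_i⁻¹ B_i⁻¹) w_i ], then e = 0. -/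

import Mathlib

open Matrix

/-- The Minkowski Gram matrix `η = diag(1, 1, 1, −1)`. -/
noncomputable def eta : Matrix (Fin 4) (Fin 4) ℝ :=
  Matrix.diagonal ![1, 1, 1, -1]

/-- The Lorentz group `O(3,1)` as a set of `4 × 4` real matrices. -/
noncomputable def O31 : Set (Matrix (Fin 4) (Fin 4) ℝ) :=
  {A | Aᵀ * eta * A = eta}

/-- The Minkowski inner product `⟨u, v⟩ = u₁v₁ + u₂v₂ + u₃v₃ − u₄v₄` on `ℝ⁴`. -/
noncomputable def minkInner (u v : Fin 4 → ℝ) : ℝ :=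
  u 0 * v 0 + u 1 * v 1 + u 2 * v 2 - u 3 * v 3

/-- `c_{i-1} = [A₁,B₁]⋯[A_{i-1},B_{i-1}]`, the ordered product of the first `i`
commutators (so `cPrev A B 0 = 1`). -/
noncomputable def cPrev {g : ℕ} (A B : Fin g → Matrix (Fin 4) (Fin 4) ℝ) (i : Fin g) :
    Matrix (Fin 4) (Fin 4) ℝ :=
  (List.ofFn fun j : Fin (i : ℕ) =>
    A (Fin.castLE i.isLt.le j) * B (Fin.castLE i.isLt.le j) *
      (A (Fin.castLE i.isLt.le j))⁻¹ * (B (Fin.castLE i.isLt.le j))⁻¹).prod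

/-!
The functional `x ↦ ⟨x, v⟩` is invariant under every Lorentz matrix fixing `v`, and such matrices
form a monoid closed under inversion. Every `c_{i-1}`, `c_{i-1} A_i`, `A_i B_i A_i⁻¹` and
`B_i A_i⁻¹ B_i⁻¹` lies in it, so the functional kills each summand `c (1 - M) x` on the right,
while it sends `e • v` to `e ⟨v, v⟩ ≠ 0`.
-/

section FormStabilizer

variable {n R : Type*} [Fintype n] [DecidableEq n] [CommRing R]

def formStabilizer (J : Matrix n n R) (v : n → R) : Submonoid (Matrix n n R) where
  carrier := {M | Mᵀ * J * M = J ∧ M *ᵥ v = v}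
  one_mem' := ⟨by simp, one_mulVec v⟩
  mul_mem' := by
    rintro M N ⟨hMJ, hMv⟩ ⟨hNJ, hNv⟩
    refine ⟨?_, by rw [← mulVec_mulVec, hNv, hMv]⟩
    calc (M * N)ᵀ * J * (M * N) = Nᵀ * (Mᵀ * J * M) * N := by
          simp only [transpose_mul, Matrix.mul_assoc]
      _ = J := by rw [hMJ, hNJ]

variable {J : Matrix n n R} {v : n → R} {M : Matrix n n R}

theorem isUnit_det_of_mem_formStabilizer (hJ : IsUnit J.det) (hM : M ∈ formStabilizer J v) :
    IsUnit M.det := by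
  have hdet := congrArg det hM.1
  rw [det_mul, det_mul, det_transpose] at hdet
  have hsq : M.det * M.det = 1 := hJ.mul_eq_right.mp (by linear_combination hdet)
  exact .of_mul_eq_one _ hsq

theorem nonsing_inv_mem_formStabilizer (hJ : IsUnit J.det) (hM : M ∈ formStabilizer J v) :
    M⁻¹ ∈ formStabilizer J v := by
  have hdet := isUnit_det_of_mem_formStabilizer hJ hM
  obtain ⟨hMJ, hMv⟩ := hM
  refine ⟨?_, ?_⟩
  · calc M⁻¹ᵀ * J * M⁻¹ = M⁻¹ᵀ * (Mᵀ * J * M) * M⁻¹ := by rw [hMJ]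
      _ = (M * M⁻¹)ᵀ * J * (M * M⁻¹) := by
          simp only [transpose_mul, Matrix.mul_assoc]
      _ = J := by rw [mul_nonsing_inv M hdet]; simp
  · conv_lhs => rw [← hMv]
    rw [mulVec_mulVec, nonsing_inv_mul M hdet, one_mulVec]

theorem commutator_mem_formStabilizer (hJ : IsUnit J.det) {N : Matrix n n R}
    (hM : M ∈ formStabilizer J v) (hN : N ∈ formStabilizer J v) :
    M * N * M⁻¹ * N⁻¹ ∈ formStabilizer J v :=
  mul_mem (mul_mem (mul_mem hM hN) (nonsing_inv_mem_formStabilizer hJ hM))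
    (nonsing_inv_mem_formStabilizer hJ hN)

theorem mulVec_dotProduct_of_mem_formStabilizer (hM : M ∈ formStabilizer J v) (x : n → R) :
    (M *ᵥ x) ⬝ᵥ (J *ᵥ v) = x ⬝ᵥ (J *ᵥ v) :=
  calc (M *ᵥ x) ⬝ᵥ (J *ᵥ v) = (M *ᵥ x) ⬝ᵥ (J *ᵥ (M *ᵥ v)) := by rw [hM.2]
    _ = x ⬝ᵥ ((Mᵀ * J * M) *ᵥ v) := by
        rw [dotProduct_mulVec, ← vecMul_transpose, vecMul_vecMul, ← dotProduct_mulVec,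
          mulVec_mulVec, Matrix.mul_assoc]
    _ = x ⬝ᵥ (J *ᵥ v) := by rw [hM.1]

theorem sub_mulVec_dotProduct_eq_zero (hM : M ∈ formStabilizer J v) (x : n → R) :
    ((1 - M) *ᵥ x) ⬝ᵥ (J *ᵥ v) = 0 := by
  rw [sub_mulVec, one_mulVec, sub_dotProduct, mulVec_dotProduct_of_mem_formStabilizer hM,
    sub_self]

end FormStabilizer

theorem isUnit_det_eta : IsUnit eta.det := by
  simp [eta, Fin.prod_univ_four]

theorem minkInner_eq_dotProduct (x y : Fin 4 → ℝ) : minkInner x y = x ⬝ᵥ (eta *ᵥ y) := by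
  simp only [minkInner, dotProduct, eta, mulVec_diagonal, Fin.sum_univ_four, cons_val_zero,
    cons_val_one, cons_val]
  ring

theorem cPrev_mem_formStabilizer {g : ℕ} {A B : Fin g → Matrix (Fin 4) (Fin 4) ℝ}
    {v : Fin 4 → ℝ} (hA : ∀ i, A i ∈ formStabilizer eta v) (hB : ∀ i, B i ∈ formStabilizer eta v)
    (i : Fin g) : cPrev A B i ∈ formStabilizer eta v := by
  refine list_prod_mem fun M hM => ?_
  obtain ⟨j, rfl⟩ := List.mem_ofFn.mp hM
  exact commutator_mem_formStabilizer isUnit_det_eta (hA _) (hB _)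

theorem euler_number_vanishes_general
    (g : ℕ)
    (A B : Fin g → Matrix (Fin 4) (Fin 4) ℝ)
    (hA : ∀ i, A i ∈ O31) (hB : ∀ i, B i ∈ O31)
    (u w : Fin g → (Fin 4 → ℝ))
    (v : Fin 4 → ℝ)
    (hAv : ∀ i, A i *ᵥ v = v) (hBv : ∀ i, B i *ᵥ v = v)
    (hv : minkInner v v ≠ 0)
    (e : ℤ)
    (he : (e : ℝ) • v =
      ∑ i : Fin g,
        (cPrev A B i *ᵥ ((1 - A i * B i * (A i)⁻¹) *ᵥ u i) +
          (cPrev A B i * A i) *ᵥ ((1 - B i * (A i)⁻¹ * (B i)⁻¹) *ᵥ w i))) :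
    e = 0 := by
  have hA' : ∀ i, A i ∈ formStabilizer eta v := fun i => ⟨hA i, hAv i⟩
  have hB' : ∀ i, B i ∈ formStabilizer eta v := fun i => ⟨hB i, hBv i⟩
  have hinv {M} (hM : M ∈ formStabilizer eta v) : M⁻¹ ∈ formStabilizer eta v :=
    nonsing_inv_mem_formStabilizer isUnit_det_eta hM
  have hc := cPrev_mem_formStabilizer hA' hB'
  have hpair : (e : ℝ) * minkInner v v = 0 := by
    rw [minkInner_eq_dotProduct, ← smul_eq_mul, ← smul_dotProduct, he, sum_dotProduct]
    refine Finset.sum_eq_zero fun i _ => ?_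
    rw [add_dotProduct, mulVec_dotProduct_of_mem_formStabilizer (hc i),
      mulVec_dotProduct_of_mem_formStabilizer (mul_mem (hc i) (hA' i)),
      sub_mulVec_dotProduct_eq_zero (mul_mem (mul_mem (hA' i) (hB' i)) (hinv (hA' i))),
      sub_mulVec_dotProduct_eq_zero (mul_mem (mul_mem (hB' i) (hinv (hA' i))) (hinv (hB' i))),
      add_zero]
  exact_mod_cast (mul_eq_zero.mp hpair).resolve_right hv

/-- The Fox-differential computation in Case 1 of the main theorem:
if `v` is a common fixed vector of Lorentz matrices `A₁, B₁, …, A_g, B_g` with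
`⟨v, v⟩ ≠ 0`, and an integer `e` satisfies
`e·v = Σᵢ [c_{i−1}(I − AᵢBᵢAᵢ⁻¹) uᵢ + c_{i−1} Aᵢ (I − BᵢAᵢ⁻¹Bᵢ⁻¹) wᵢ]`,
then `e = 0`. -/
theorem euler_number_vanishes
    (g : ℕ) (hg : 1 ≤ g)
    (A B : Fin g → Matrix (Fin 4) (Fin 4) ℝ)
    (hA : ∀ i, A i ∈ O31) (hB : ∀ i, B i ∈ O31)
    (u w : Fin g → (Fin 4 → ℝ))
    (v : Fin 4 → ℝ)
    (hAv : ∀ i, A i *ᵥ v = v) (hBv : ∀ i, B i *ᵥ v = v)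
    (hv : minkInner v v ≠ 0)
    (e : ℤ)
    (he : (e : ℝ) • v =
      ∑ i : Fin g,
        (cPrev A B i *ᵥ ((1 - A i * B i * (A i)⁻¹) *ᵥ u i) +
          (cPrev A B i * A i) *ᵥ ((1 - B i * (A i)⁻¹ * (B i)⁻¹) *ᵥ w i))) :
    e = 0 :=
  euler_number_vanishes_general g A B hA hB u w v hAv hBv hv e he
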